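/- Suppose 0 < β < 1/(2N+1) and m ≥ 3. Let t = (t_0, t_1, …, t_m) where t_0 = 0 and t_j = (1-β)/N · Σ_{k=1}^{j} β^{-k} for 1 ≤ j ≤ m. Then Γ_t = ⋃_{j=0}^m (Γ + t_j) is not a self-similar set. -/

import Mathlib

noncomputable section

namespace HSCantor

/-- A `D`-coding of `x`: a digit sequence `c` with digits in `D ⊆ ℤ` such that
`x = (1-β)/N · Σ_{k=1}^∞ c_k β^{k-1}` (here indexed from `k = 0`). -/
def IsCoding (N : ℕ) (β : ℝ) (D : Set ℤ) (x : ℝ) (c : ℕ → ℤ) : Prop :=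
  (∀ k, c k ∈ D) ∧ x = (1 - β) / N * ∑' k : ℕ, (c k : ℝ) * β ^ k

/-- The set `Γ_{β,D}` for a digit set `D ⊆ ℤ`. -/
def cantorD (N : ℕ) (β : ℝ) (D : Set ℤ) : Set ℝ := { x | ∃ c, IsCoding N β D x c }

/-- The homogeneous symmetric Cantor set `Γ = Γ_{β,{0,1,…,N}}`. -/
def Gamma (N : ℕ) (β : ℝ) : Set ℝ := cantorD N β (Set.Icc 0 (N : ℤ))

/-- `E ⊆ ℝ` is a self-similar set: it is nonempty, compact, and is the union of its
images under finitely many contracting similitudes `x ↦ r x + b`, `0 < |r| < 1`. -/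
def IsSelfSimilar (E : Set ℝ) : Prop :=
  E.Nonempty ∧ IsCompact E ∧ ∃ F : Finset (ℝ × ℝ),
    (∀ p ∈ F, 0 < |p.1| ∧ |p.1| < 1) ∧
    E = ⋃ p ∈ F, (fun x => p.1 * x + p.2) '' E

/-- `Γ_t = ⋃_{j=0}^m (Γ + t_j)`. -/
def GammaT (N : ℕ) (β : ℝ) {m : ℕ} (t : Fin (m + 1) → ℝ) : Set ℝ :=
  ⋃ j, (fun x => x + t j) '' Gamma N β

/-- The set `T = ⋃_{n≥1} { (1-β)/N · Σ_{k=1}^n j_k β^{-k} : j_k ∈ {0,…,N} }`. -/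
def Tset (N : ℕ) (β : ℝ) : Set ℝ :=
  { x | ∃ n : ℕ, 1 ≤ n ∧ ∃ c : ℕ → ℕ, (∀ k, c k ≤ N) ∧
      x = (1 - β) / N * ∑ k ∈ Finset.Icc 1 n, (c k : ℝ) * β ^ (-(k : ℤ)) }

/-- `d` is a digit representation of the translation vector `t` with `τ` digits:
`t_j = (1-β)/N · Σ_{k=1}^τ d_{j,k} β^{-k}` with all digits in `{0,…,N}`. -/
def IsDigitRep (N : ℕ) (β : ℝ) {m : ℕ} (t : Fin (m + 1) → ℝ) (τ : ℕ)
    (d : Fin (m + 1) → ℕ → ℕ) : Prop :=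
  (∀ j k, d j k ≤ N) ∧
    ∀ j, t j = (1 - β) / N * ∑ k ∈ Finset.Icc 1 τ, (d j k : ℝ) * β ^ (-(k : ℤ))

/-- `d` is a digit representation of `t` with `τ = τ_t` digits, `τ_t` minimal. -/
def IsMinimalRep (N : ℕ) (β : ℝ) {m : ℕ} (t : Fin (m + 1) → ℝ) (τ : ℕ)
    (d : Fin (m + 1) → ℕ → ℕ) : Prop :=
  IsDigitRep N β t τ d ∧ ∀ τ' < τ, ∀ d', ¬ IsDigitRep N β t τ' d'

/-- `s_k = max_{0 ≤ j ≤ m} t_{j,k}`. -/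
def digitSup {m : ℕ} (d : Fin (m + 1) → ℕ → ℕ) (k : ℕ) : ℕ :=
  Finset.univ.sup fun j => d j k

/-- Words of length `n` over the alphabet `{0,1,…,N}`, as lists of naturals. -/
def Words (N n : ℕ) : Set (List ℕ) := { w | w.length = n ∧ ∀ x ∈ w, x ≤ N }

/-- `Ω_t^n`: words `i_1 … i_n ∈ {0,…,N}^n` with `i_{n+1-k} ≤ N - s_k` for `1 ≤ k ≤ τ`.
(A list `w = [i_1, …, i_n]` satisfies `i_{n+1-k} = w.getD (n-k) 0`.) -/
def Omega (N τ : ℕ) (s : ℕ → ℕ) (n : ℕ) : Set (List ℕ) :=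
  { w | w ∈ Words N n ∧ ∀ k, 1 ≤ k → k ≤ τ → w.getD (n - k) 0 + s k ≤ N }

/-- `Ω̂_t^n`: words `i_1 … i_n ∈ {0,…,N}^n` with `i_{n+1-k} ≥ s_k` for `1 ≤ k ≤ τ`. -/
def OmegaHat (N τ : ℕ) (s : ℕ → ℕ) (n : ℕ) : Set (List ℕ) :=
  { w | w ∈ Words N n ∧ ∀ k, 1 ≤ k → k ≤ τ → s k ≤ w.getD (n - k) 0 }

/-- `W_t^τ = A_t^τ ∪ Â_t^τ`: words obtained from a word in `Ω_t^τ` (resp. `Ω̂_t^τ`)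
by adding (resp. subtracting) the digits of some `t_j` to the last `τ` positions. -/
def Wset (N : ℕ) {m : ℕ} (τ : ℕ) (d : Fin (m + 1) → ℕ → ℕ) : Set (List ℕ) :=
  { v | ∃ w ∈ Omega N τ (digitSup d) τ, ∃ j : Fin (m + 1),
      v = List.ofFn fun idx : Fin τ => w.getD idx 0 + d j (τ - (idx : ℕ)) } ∪
  { v | ∃ w ∈ OmegaHat N τ (digitSup d) τ, ∃ j : Fin (m + 1),
      v = List.ofFn fun idx : Fin τ => w.getD idx 0 - d j (τ - (idx : ℕ)) }

/-- The symbolic admissibility condition: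
`⋃_{n=τ}^ℓ {0,…,N}^{n-τ} × W_t^τ × {0,…,N}^{ℓ-n} = {0,…,N}^ℓ` for some `ℓ ≥ τ`. -/
def AdmissibleWith (N : ℕ) {m : ℕ} (τ : ℕ) (d : Fin (m + 1) → ℕ → ℕ) : Prop :=
  ∃ ℓ, τ ≤ ℓ ∧
    (⋃ n ∈ Finset.Icc τ ℓ,
      { z : List ℕ | ∃ u ∈ Words N (n - τ), ∃ w ∈ Wset N τ d, ∃ v ∈ Words N (ℓ - n),
          z = u ++ w ++ v }) = Words N ℓ

/-- `t` is an admissible translation vector. -/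
def IsAdmissible (N : ℕ) (β : ℝ) {m : ℕ} (t : Fin (m + 1) → ℝ) : Prop :=
  (∀ j, t j ∈ Tset N β) ∧
    ∃ τ d, IsMinimalRep N β t τ d ∧ AdmissibleWith N τ d

/-- The vertex set `V_t = {0,…,N}^τ \ W_t^τ` of the directed graph `G_t`. -/
def Vset (N : ℕ) {m : ℕ} (τ : ℕ) (d : Fin (m + 1) → ℕ → ℕ) : Set (List ℕ) :=
  Words N τ \ Wset N τ d

/-- The graph on `V` with an edge `i → j` iff `i_2 … i_τ = j_1 … j_{τ-1}` has a cycle: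
a directed path of positive length starting and ending at the same vertex. -/
def HasCycle (V : Set (List ℕ)) : Prop :=
  ∃ (L : ℕ) (p : ℕ → List ℕ), 0 < L ∧ (∀ i ≤ L, p i ∈ V) ∧
    (∀ i < L, (p i).drop 1 = (p (i + 1)).dropLast) ∧ p 0 = p L

open Classical in
/-- The adjacency matrix of the directed graph `G_t`, indexed by all words of length `τ`
over `{0,…,N}`; its `(i,j)` entry is `1` exactly when `i, j ∈ V_t` and there is a
directed edge `i → j`, and the rows and columns outside `V_t` are zero. -/
def adjMat (N τ : ℕ) (V : Set (List ℕ)) :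
    Matrix (Fin τ → Fin (N + 1)) (Fin τ → Fin (N + 1)) ℕ :=
  fun i j =>
    if (List.ofFn fun k => (i k : ℕ)) ∈ V ∧ (List.ofFn fun k => (j k : ℕ)) ∈ V ∧
        (List.ofFn fun k => (i k : ℕ)).drop 1 = (List.ofFn fun k => (j k : ℕ)).dropLast
    then 1 else 0

/-- `φ_i(x) = βx + i(1-β)/N`. -/
def phi (N : ℕ) (β : ℝ) (i : ℕ) (x : ℝ) : ℝ := β * x + i * (1 - β) / N

/-- `φ_{i_1 … i_n} = φ_{i_1} ∘ ⋯ ∘ φ_{i_n}`. -/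
def phiWord (N : ℕ) (β : ℝ) (w : List ℕ) (x : ℝ) : ℝ := w.foldr (phi N β) x

/-- The conjugate translation vector `t̂_j = t_m - t_{m-j}`. -/
def conj {m : ℕ} (t : Fin (m + 1) → ℝ) : Fin (m + 1) → ℝ :=
  fun j => t (Fin.last m) - t ⟨m - (j : ℕ), Nat.lt_succ_of_le (Nat.sub_le m j)⟩

section Aux

variable {N : ℕ} {β : ℝ}

/-- digit value -/
def gval (N : ℕ) (β : ℝ) (a : ℕ → ℤ) : ℝ := (1 - β) / N * ∑' k : ℕ, (a k : ℝ) * β ^ k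

lemma hblt1 (hN : 0 < N) (hβ0 : 0 < β) (hβ1 : β < 1 / (2 * N + 1)) : β < 1 := by
  have h1 : (1:ℝ) ≤ 2 * N + 1 := by
    have : (0:ℝ) ≤ N := Nat.cast_nonneg N
    linarith
  calc β < 1 / (2 * N + 1) := hβ1
    _ ≤ 1 := by rw [div_le_one (by positivity)]; exact h1

lemma hB (hN : 0 < N) (hβ0 : 0 < β) (hβ1 : β < 1 / (2 * N + 1)) : (2 * N + 1) * β < 1 := by
  have : (0:ℝ) < 2 * N + 1 := by positivity
  calc (2 * N + 1 : ℝ) * β < (2 * N + 1) * (1 / (2 * N + 1)) := by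
        exact mul_lt_mul_of_pos_left hβ1 this
    _ = 1 := by field_simp

lemma summable_geo (hβ0 : 0 < β) (hβ1' : β < 1) : Summable (fun k : ℕ => β ^ k) :=
  summable_geometric_of_lt_one hβ0.le hβ1'

lemma summable_digit (hβ0 : 0 < β) (hβ1' : β < 1) (a : ℕ → ℤ) {C : ℝ}
    (h : ∀ k, |(a k : ℝ)| ≤ C) : Summable (fun k : ℕ => (a k : ℝ) * β ^ k) := by
  apply Summable.of_norm_bounded (g := fun k => C * β ^ k)
    (((summable_geo hβ0 hβ1')).mul_left C)
  intro k
  rw [Real.norm_eq_abs, abs_mul, abs_pow, abs_of_nonneg hβ0.le]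
  exact mul_le_mul_of_nonneg_right (h k) (by positivity)

lemma tsum_digit_le (hβ0 : 0 < β) (hβ1' : β < 1) (a : ℕ → ℤ) {C : ℝ} (hC : 0 ≤ C)
    (h : ∀ k, |(a k : ℝ)| ≤ C) : |∑' k : ℕ, (a k : ℝ) * β ^ k| ≤ C / (1 - β) := by
  have hg : HasSum (fun k : ℕ => C * β ^ k) (C * (1 - β)⁻¹) :=
    (hasSum_geometric_of_lt_one hβ0.le hβ1').mul_left C
  have h1 : |∑' k : ℕ, (a k : ℝ) * β ^ k| ≤ C * (1 - β)⁻¹ := by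
    rw [← Real.norm_eq_abs]
    apply tsum_of_norm_bounded hg
    intro k
    rw [Real.norm_eq_abs, abs_mul, abs_pow, abs_of_nonneg hβ0.le]
    exact mul_le_mul_of_nonneg_right (h k) (by positivity)
  calc |∑' k : ℕ, (a k : ℝ) * β ^ k| ≤ C * (1 - β)⁻¹ := h1
    _ = C / (1 - β) := by rw [div_eq_mul_inv]

lemma mem_Gamma_iff {x : ℝ} :
    x ∈ Gamma N β ↔ ∃ a : ℕ → ℤ, (∀ k, 0 ≤ a k ∧ a k ≤ N) ∧ x = gval N β a := by
  constructor
  · rintro ⟨c, hc, rfl⟩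
    exact ⟨c, fun k => (Set.mem_Icc.mp (hc k)), rfl⟩
  · rintro ⟨a, ha, rfl⟩
    exact ⟨a, fun k => Set.mem_Icc.mpr (ha k), rfl⟩

lemma gval_nonneg (hN : 0 < N) (hβ0 : 0 < β) (hβ1' : β < 1) (a : ℕ → ℤ)
    (ha : ∀ k, 0 ≤ a k) : 0 ≤ gval N β a := by
  have h1 : 0 ≤ ∑' k : ℕ, (a k : ℝ) * β ^ k := by
    apply tsum_nonneg
    intro k
    have : (0:ℝ) ≤ (a k : ℝ) := by exact_mod_cast ha k
    positivity
  have h2 : (0:ℝ) ≤ (1 - β) / N := by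
    apply div_nonneg (by linarith) (Nat.cast_nonneg N)
  exact mul_nonneg h2 h1

lemma gval_le_one (hN : 0 < N) (hβ0 : 0 < β) (hβ1' : β < 1) (a : ℕ → ℤ)
    (ha : ∀ k, 0 ≤ a k ∧ a k ≤ N) : gval N β a ≤ 1 := by
  have hb : ∀ k, |(a k : ℝ)| ≤ (N : ℝ) := by
    intro k
    rw [abs_of_nonneg (by exact_mod_cast (ha k).1)]
    exact_mod_cast (ha k).2
  have h1 := tsum_digit_le hβ0 hβ1' a (Nat.cast_nonneg N) hb
  have h2 : ∑' k : ℕ, (a k : ℝ) * β ^ k ≤ (N : ℝ) / (1 - β) := (abs_le.mp h1).2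
  have hNpos : (0:ℝ) < N := by exact_mod_cast hN
  have h3 : (0:ℝ) < (1 - β) / N := div_pos (by linarith) hNpos
  have hne : (1:ℝ) - β ≠ 0 := by linarith
  calc gval N β a ≤ (1 - β) / N * ((N : ℝ) / (1 - β)) :=
        mul_le_mul_of_nonneg_left h2 h3.le
    _ = 1 := by field_simp

lemma Gamma_subset_Icc (hN : 0 < N) (hβ0 : 0 < β) (hβ1' : β < 1) :
    Gamma N β ⊆ Set.Icc 0 1 := by
  intro x hx
  rcases mem_Gamma_iff.mp hx with ⟨a, ha, rfl⟩
  exact ⟨gval_nonneg hN hβ0 hβ1' a (fun k => (ha k).1), gval_le_one hN hβ0 hβ1' a ha⟩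

lemma zero_mem_Gamma (hN : 0 < N) (hβ0 : 0 < β) (hβ1' : β < 1) : (0:ℝ) ∈ Gamma N β := by
  rw [mem_Gamma_iff]
  refine ⟨fun _ => 0, fun k => by simp [hN.le], ?_⟩
  simp [gval]

lemma one_mem_Gamma (hN : 0 < N) (hβ0 : 0 < β) (hβ1' : β < 1) : (1:ℝ) ∈ Gamma N β := by
  rw [mem_Gamma_iff]
  refine ⟨fun _ => N, fun k => by simp, ?_⟩
  have h1 : ∑' k : ℕ, ((N:ℤ) : ℝ) * β ^ k = (N : ℝ) * (1 - β)⁻¹ := by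
    push_cast
    rw [tsum_mul_left, tsum_geometric_of_lt_one hβ0.le hβ1']
  have hNpos : (0:ℝ) < N := by exact_mod_cast hN
  have hne : (1:ℝ) - β ≠ 0 := by linarith
  rw [gval, h1]
  field_simp

lemma uniq (hN : 0 < N) (hβ0 : 0 < β) (hβ1 : β < 1 / (2 * N + 1)) (a : ℕ → ℤ)
    (h : ∀ k, |(a k : ℝ)| ≤ 2 * N)
    (hsum : ∑' k : ℕ, (a k : ℝ) * β ^ k = 0) : ∀ k, a k = 0 := by
  have hβ1' := hblt1 hN hβ0 hβ1
  have h2N : (0:ℝ) ≤ 2 * N := by positivity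
  intro k
  induction k using Nat.strong_induction_on with
  | _ k ih =>
    have hs : Summable (fun k : ℕ => (a k : ℝ) * β ^ k) := summable_digit hβ0 hβ1' a h
    have hsplit : (∑ i ∈ Finset.range k, (a i : ℝ) * β ^ i)
        + ∑' i : ℕ, (a (i + k) : ℝ) * β ^ (i + k) = ∑' i : ℕ, (a i : ℝ) * β ^ i :=
      Summable.sum_add_tsum_nat_add (f := fun k : ℕ => (a k : ℝ) * β ^ k) k hs
    have hzero : ∑ i ∈ Finset.range k, (a i : ℝ) * β ^ i = 0 := by
      apply Finset.sum_eq_zero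
      intro i hi
      rw [ih i (Finset.mem_range.mp hi)]
      simp
    have htail : ∑' i : ℕ, (a (i + k) : ℝ) * β ^ (i + k) = 0 := by
      rw [hsum, hzero] at hsplit
      linarith
    have hfac : ∀ i : ℕ, (a (i + k) : ℝ) * β ^ (i + k) = ((a (i + k) : ℝ) * β ^ i) * β ^ k := by
      intro i; rw [pow_add]; ring
    have htail2 : (∑' i : ℕ, (a (i + k) : ℝ) * β ^ i) * β ^ k = 0 := by
      rw [← tsum_mul_right]
      rw [← htail]
      exact tsum_congr (fun i => (hfac i).symm)
    have hβk : β ^ k ≠ 0 := by positivity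
    have htail3 : ∑' i : ℕ, (a (i + k) : ℝ) * β ^ i = 0 := by
      rcases mul_eq_zero.mp htail2 with h' | h'
      · exact h'
      · exact absurd h' hβk
    have hs2 : Summable (fun i : ℕ => (a (i + k) : ℝ) * β ^ i) :=
      summable_digit hβ0 hβ1' (fun i => a (i + k)) (fun i => h (i + k))
    have hshift := Summable.tsum_eq_zero_add hs2
    rw [htail3] at hshift
    have hfac2 : ∀ i : ℕ, (a (i + 1 + k) : ℝ) * β ^ (i + 1) = β * ((a (i + 1 + k) : ℝ) * β ^ i) := by
      intro i; rw [pow_succ]; ring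
    have htail4 : ∑' i : ℕ, (a (i + 1 + k) : ℝ) * β ^ (i + 1) =
        β * ∑' i : ℕ, (a (i + 1 + k) : ℝ) * β ^ i := by
      rw [← tsum_mul_left]
      exact tsum_congr hfac2
    have hbound := tsum_digit_le hβ0 hβ1' (fun i => a (i + 1 + k)) h2N (fun i => h (i + 1 + k))
    have hak : (a k : ℝ) = - (β * ∑' i : ℕ, (a (i + 1 + k) : ℝ) * β ^ i) := by
      have : (0:ℝ) = (a k : ℝ) + ∑' i : ℕ, (a (i + 1 + k) : ℝ) * β ^ (i + 1) := by
        simpa using hshift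
      rw [htail4] at this
      linarith
    have habs : |(a k : ℝ)| < 1 := by
      rw [hak, abs_neg, abs_mul, abs_of_nonneg hβ0.le]
      have h2 : |∑' i : ℕ, (a (i + 1 + k) : ℝ) * β ^ i| ≤ 2 * N / (1 - β) := hbound
      have hβB := hB hN hβ0 hβ1
      have hNpos : (0:ℝ) < N := by exact_mod_cast hN
      calc β * |∑' i : ℕ, (a (i + 1 + k) : ℝ) * β ^ i| ≤ β * (2 * N / (1 - β)) :=
            mul_le_mul_of_nonneg_left h2 hβ0.le
        _ < 1 := by
            rw [mul_div_assoc', mul_comm]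
            rw [div_lt_one (by linarith)]
            nlinarith
    have habsz : |a k| < 1 := by exact_mod_cast (by push_cast at habs ⊢; exact habs : |((a k : ℤ):ℝ)| < 1)
    rw [abs_lt] at habsz
    omega

lemma uniq2 (hN : 0 < N) (hβ0 : 0 < β) (hβ1 : β < 1 / (2 * N + 1)) (a b : ℕ → ℤ)
    (ha : ∀ k, 0 ≤ a k ∧ a k ≤ 2 * N) (hb : ∀ k, 0 ≤ b k ∧ b k ≤ 2 * N)
    (heq : gval N β a = gval N β b) : ∀ k, a k = b k := by
  have hβ1' := hblt1 hN hβ0 hβ1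
  have hNpos : (0:ℝ) < N := by exact_mod_cast hN
  have hco : (0:ℝ) < (1 - β) / N := div_pos (by linarith) hNpos
  have habs : ∀ (c : ℕ → ℤ), (∀ k, 0 ≤ c k ∧ c k ≤ 2 * N) → ∀ k, |(c k : ℝ)| ≤ 2 * N := by
    intro c hc k
    rw [abs_of_nonneg (by exact_mod_cast (hc k).1)]
    exact_mod_cast (hc k).2
  have hteq : ∑' k : ℕ, (a k : ℝ) * β ^ k = ∑' k : ℕ, (b k : ℝ) * β ^ k := by
    have := heq
    unfold gval at this
    exact mul_left_cancel₀ hco.ne' this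
  have hsa : Summable (fun k : ℕ => (a k : ℝ) * β ^ k) := summable_digit hβ0 hβ1' a (habs a ha)
  have hsb : Summable (fun k : ℕ => (b k : ℝ) * β ^ k) := summable_digit hβ0 hβ1' b (habs b hb)
  have hz : ∑' k : ℕ, ((a k - b k : ℤ) : ℝ) * β ^ k = 0 := by
    have : ∀ k : ℕ, ((a k - b k : ℤ) : ℝ) * β ^ k = (a k : ℝ) * β ^ k - (b k : ℝ) * β ^ k := by
      intro k; push_cast; ring
    rw [tsum_congr this, Summable.tsum_sub hsa hsb, hteq, sub_self]
  have hbd : ∀ k, |((a k - b k : ℤ) : ℝ)| ≤ 2 * N := by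
    intro k
    push_cast
    rw [abs_sub_comm]
    have h1 : (0:ℝ) ≤ a k := by exact_mod_cast (ha k).1
    have h2 : (a k : ℝ) ≤ 2 * N := by exact_mod_cast (ha k).2
    have h3 : (0:ℝ) ≤ b k := by exact_mod_cast (hb k).1
    have h4 : (b k : ℝ) ≤ 2 * N := by exact_mod_cast (hb k).2
    rw [abs_le]
    constructor <;> linarith
  intro k
  have := uniq hN hβ0 hβ1 (fun k => a k - b k) hbd hz k
  omega

lemma gval_decomp (hN : 0 < N) (hβ0 : 0 < β) (hβ1' : β < 1) (a : ℕ → ℤ)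
    {C : ℝ} (ha : ∀ k, |(a k : ℝ)| ≤ C) :
    gval N β a = (1 - β) / N * a 0 + β * gval N β (fun k => a (k + 1)) := by
  have hs : Summable (fun k : ℕ => (a k : ℝ) * β ^ k) := summable_digit hβ0 hβ1' a ha
  have h1 := Summable.tsum_eq_zero_add hs
  have h2 : ∑' k : ℕ, (a (k + 1) : ℝ) * β ^ (k + 1) = β * ∑' k : ℕ, (a (k + 1) : ℝ) * β ^ k := by
    rw [← tsum_mul_left]
    exact tsum_congr (fun k => by rw [pow_succ]; ring)
  unfold gval
  rw [h1, h2]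
  simp only [pow_zero, mul_one]
  ring

lemma mem_decomp (hN : 0 < N) (hβ0 : 0 < β) (hβ1' : β < 1) {x : ℝ} (hx : x ∈ Gamma N β) :
    ∃ i : ℤ, 0 ≤ i ∧ i ≤ N ∧ ∃ y ∈ Gamma N β, x = (1 - β) / N * i + β * y := by
  rcases mem_Gamma_iff.mp hx with ⟨a, ha, rfl⟩
  have hb : ∀ k, |(a k : ℝ)| ≤ (N : ℝ) := by
    intro k
    rw [abs_of_nonneg (by exact_mod_cast (ha k).1)]
    exact_mod_cast (ha k).2
  refine ⟨a 0, (ha 0).1, (ha 0).2, gval N β (fun k => a (k + 1)), ?_, ?_⟩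
  · exact mem_Gamma_iff.mpr ⟨fun k => a (k + 1), fun k => ha (k + 1), rfl⟩
  · exact gval_decomp hN hβ0 hβ1' a hb

lemma decomp_mem (hN : 0 < N) (hβ0 : 0 < β) (hβ1' : β < 1) {i : ℤ} (hi0 : 0 ≤ i)
    (hiN : i ≤ N) {y : ℝ} (hy : y ∈ Gamma N β) :
    (1 - β) / N * i + β * y ∈ Gamma N β := by
  rcases mem_Gamma_iff.mp hy with ⟨b, hb, rfl⟩
  set a : ℕ → ℤ := fun k => if k = 0 then i else b (k - 1) with hadef
  have ha : ∀ k, 0 ≤ a k ∧ a k ≤ N := by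
    intro k
    by_cases h : k = 0 <;> simp [hadef, h]
    · exact ⟨hi0, hiN⟩
    · exact hb (k - 1)
  have habs : ∀ k, |(a k : ℝ)| ≤ (N : ℝ) := by
    intro k
    rw [abs_of_nonneg (by exact_mod_cast (ha k).1)]
    exact_mod_cast (ha k).2
  have h1 := gval_decomp hN hβ0 hβ1' a habs
  have h2 : (fun k => a (k + 1)) = b := by
    funext k
    simp [hadef]
  have h3 : a 0 = i := by simp [hadef]
  rw [h2, h3] at h1
  exact mem_Gamma_iff.mpr ⟨a, ha, h1.symm⟩

lemma compl_mem (hN : 0 < N) (hβ0 : 0 < β) (hβ1' : β < 1) {x : ℝ} (hx : x ∈ Gamma N β) :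
    1 - x ∈ Gamma N β := by
  rcases mem_Gamma_iff.mp hx with ⟨a, ha, rfl⟩
  refine mem_Gamma_iff.mpr ⟨fun k => N - a k, fun k => by show 0 ≤ (N:ℤ) - a k ∧ (N:ℤ) - a k ≤ N; have := ha k; omega, ?_⟩
  have hsa : Summable (fun k : ℕ => (a k : ℝ) * β ^ k) := by
    apply summable_digit hβ0 hβ1' a (C := (N:ℝ))
    intro k
    rw [abs_of_nonneg (by exact_mod_cast (ha k).1)]
    exact_mod_cast (ha k).2
  have hsN : Summable (fun k : ℕ => ((N:ℤ) : ℝ) * β ^ k) := by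
    apply summable_digit hβ0 hβ1' (fun _ => (N:ℤ)) (C := (N:ℝ))
    intro k
    simp
  have h1 : ∑' k : ℕ, ((N - a k : ℤ) : ℝ) * β ^ k
      = ∑' k : ℕ, (((N:ℤ) : ℝ) * β ^ k - (a k : ℝ) * β ^ k) := by
    apply tsum_congr
    intro k
    push_cast
    ring
  have h2 : ∑' k : ℕ, (((N:ℤ) : ℝ) * β ^ k) = (N : ℝ) * (1 - β)⁻¹ := by
    push_cast
    rw [tsum_mul_left, tsum_geometric_of_lt_one hβ0.le hβ1']
  have hNpos : (0:ℝ) < N := by exact_mod_cast hN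
  have hne : (1:ℝ) - β ≠ 0 := by linarith
  unfold gval
  rw [h1, Summable.tsum_sub hsN hsa, h2]
  field_simp

lemma Gamma_isCompact (hN : 0 < N) (hβ0 : 0 < β) (hβ1' : β < 1) :
    IsCompact (Gamma N β) := by
  set F : (ℕ → Fin (N + 1)) → ℝ := fun c => gval N β (fun k => ((c k : ℕ) : ℤ)) with hFdef
  have hcont : Continuous F := by
    unfold gval at hFdef
    rw [hFdef]
    apply Continuous.mul continuous_const
    apply continuous_tsum (u := fun k => (N : ℝ) * β ^ k)
    · intro k
      have h1 : Continuous (fun c : (ℕ → Fin (N + 1)) => c k) := continuous_apply k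
      have h2 : Continuous (fun i : Fin (N + 1) => (((i : ℕ) : ℤ) : ℝ)) :=
        continuous_of_discreteTopology
      exact (h2.comp h1).mul continuous_const
    · exact (summable_geo hβ0 hβ1').mul_left _
    · intro k c
      show ‖(((c k : ℕ) : ℤ) : ℝ) * β ^ k‖ ≤ (N : ℝ) * β ^ k
      rw [Real.norm_eq_abs, abs_mul, abs_pow, abs_of_nonneg hβ0.le]
      apply mul_le_mul_of_nonneg_right _ (by positivity)
      rw [abs_of_nonneg (by positivity)]
      have : (c k : ℕ) ≤ N := Nat.lt_succ_iff.mp (c k).2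
      exact_mod_cast this
  have hrange : Gamma N β = Set.range F := by
    ext x
    rw [mem_Gamma_iff]
    constructor
    · rintro ⟨a, ha, rfl⟩
      refine ⟨fun k => ⟨(a k).toNat, by have := (ha k).1; have := (ha k).2; omega⟩, ?_⟩
      show gval N β _ = gval N β a
      congr 1
      funext k
      have := (ha k).1
      simp [Int.toNat_of_nonneg this]
    · rintro ⟨c, rfl⟩
      refine ⟨fun k => ((c k : ℕ) : ℤ), fun k => ⟨by positivity, ?_⟩, rfl⟩
      show (((c k : ℕ) : ℤ)) ≤ (N : ℤ)
      have : (c k : ℕ) ≤ N := Nat.lt_succ_iff.mp (c k).2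
      exact_mod_cast this
  rw [hrange]
  exact isCompact_range hcont

lemma hole_le (hN : 0 < N) (hβ0 : 0 < β) (hβ1 : β < 1 / (2 * N + 1)) {p q : ℝ}
    (hp : p ∈ Gamma N β) (hq : q ∈ Gamma N β) (hpq : p < q)
    (hh : ∀ w ∈ Gamma N β, ¬(p < w ∧ w < q)) :
    q - p ≤ (1 - β) / N - β := by
  have hβ1' := hblt1 hN hβ0 hβ1
  have hNpos : (0:ℝ) < N := by exact_mod_cast hN
  have hBB := hB hN hβ0 hβ1
  have hlam : 2 * β < (1 - β) / N := by
    rw [lt_div_iff₀ hNpos]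
    nlinarith
  by_contra hcon
  push_neg at hcon
  rcases mem_decomp hN hβ0 hβ1' hp with ⟨i, hi0, hiN, y, hy, hpy⟩
  have hy01 := Gamma_subset_Icc hN hβ0 hβ1' hy
  have hq01 := Gamma_subset_Icc hN hβ0 hβ1' hq
  have hw1 : (1 - β) / N * i + β ∈ Gamma N β := by
    have := decomp_mem hN hβ0 hβ1' hi0 hiN (one_mem_Gamma hN hβ0 hβ1')
    simpa using this
  have hpw1 : p ≤ (1 - β) / N * i + β := by
    rw [hpy]
    nlinarith [hy01.2, hβ0]
  rcases lt_or_ge p ((1 - β) / N * i + β) with h1 | h1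
  · -- p < w1, so q ≤ w1
    have h2 : ¬ ((1 - β) / N * i + β) < q := fun hlt => hh _ hw1 ⟨h1, hlt⟩
    push_neg at h2
    have hby : 0 ≤ β * y := mul_nonneg hβ0.le hy01.1
    have : q - p ≤ β - β * y := by rw [hpy]; linarith
    linarith
  · -- w1 ≤ p : p = w1
    have hpval : p = (1 - β) / N * i + β := le_antisymm hpw1 h1
    rcases lt_or_ge i (N : ℤ) with hiN' | hiN'
    · have hw2 : (1 - β) / N * ((i : ℝ) + 1) ∈ Gamma N β := by
        have h0 := decomp_mem hN hβ0 hβ1' (i := i + 1) (by omega) (by omega)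
          (zero_mem_Gamma hN hβ0 hβ1')
        have he : (1 - β) / N * (((i + 1 : ℤ)) : ℝ) + β * 0
            = (1 - β) / N * ((i : ℝ) + 1) := by push_cast; ring
        rwa [he] at h0
      have hexp : (1 - β) / N * ((i : ℝ) + 1) = (1 - β) / N * i + (1 - β) / N := by ring
      have hp2 : p < (1 - β) / N * ((i : ℝ) + 1) := by
        rw [hpval, hexp]; linarith
      have h3 : ¬ ((1 - β) / N * ((i : ℝ) + 1)) < q := fun hlt => hh _ hw2 ⟨hp2, hlt⟩
      push_neg at h3
      rw [hpval] at hcon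
      rw [hexp] at h3
      linarith
    · -- i = N : p = 1
      have hiNe : i = (N : ℤ) := le_antisymm hiN hiN'
      have hNne : (N : ℝ) ≠ 0 := ne_of_gt hNpos
      have hpl : p = 1 := by
        rw [hpval, hiNe]
        push_cast
        field_simp
        ring
      linarith [hq01.2, hpq]

lemma gval_zero : gval N β (fun _ => 0) = 0 := by simp [gval]

set_option maxHeartbeats 2000000 in
lemma lemR (hN : 0 < N) (hβ0 : 0 < β) (hβ1 : β < 1 / (2 * N + 1)) :
    ∀ (n : ℕ) (r c : ℝ), β ^ (n + 1) < r → r ≤ β ^ n →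
    (∀ x ∈ Gamma N β, r * x + c ∈ Gamma N β) →
    r = β ^ n ∧ ∃ v : ℕ → ℤ, (∀ k, 0 ≤ v k ∧ v k ≤ N) ∧ (∀ k, n ≤ k → v k = 0)
      ∧ c = gval N β v := by
  have hβ1' := hblt1 hN hβ0 hβ1
  have hNpos : (0:ℝ) < N := by exact_mod_cast hN
  have hBB := hB hN hβ0 hβ1
  have hlam : 2 * β < (1 - β) / N := by
    rw [lt_div_iff₀ hNpos]
    nlinarith
  have hlampos : 0 < (1 - β) / N := by linarith
  have hbnd : ∀ u : ℝ, u ∈ Set.Icc (0:ℝ) 1 → 0 ≤ β * u ∧ β * u ≤ β := by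
    intro u hu
    constructor
    · exact mul_nonneg hβ0.le hu.1
    · nlinarith [hu.2]
  intro n
  induction n with
  | zero =>
    intro r c hr1 hr2
    rw [pow_one] at hr1
    rw [pow_zero] at hr2
    intro hmap
    have hr0 : 0 < r := lt_trans hβ0 hr1
    have hc : c ∈ Gamma N β := by
      have := hmap 0 (zero_mem_Gamma hN hβ0 hβ1')
      simpa using this
    have hcr : r + c ∈ Gamma N β := by
      have := hmap 1 (one_mem_Gamma hN hβ0 hβ1')
      simpa using this
    rcases mem_decomp hN hβ0 hβ1' hc with ⟨i, hi0, hiN, y, hy, hcy⟩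
    rcases mem_decomp hN hβ0 hβ1' hcr with ⟨i', hi0', hiN', y', hy', hcry⟩
    have hy01 := Gamma_subset_Icc hN hβ0 hβ1' hy
    have hy01' := Gamma_subset_Icc hN hβ0 hβ1' hy'
    have hby := hbnd y hy01
    have hby' := hbnd y' hy01'
    have hii : i < i' := by
      rcases lt_trichotomy i i' with h | h | h
      · exact h
      · exfalso
        have he : r = β * y' - β * y := by
          have h1 : r + c = (1 - β) / N * i + β * y' := by rw [hcry, h]
          rw [hcy] at h1
          linarith
        linarith [hby.1, hby'.2]
      · exfalso
        have hcast : (i' : ℝ) + 1 ≤ i := by exact_mod_cast h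
        have h1 : (1 - β) / N * i' + (1 - β) / N ≤ (1 - β) / N * i := by
          have := mul_le_mul_of_nonneg_left hcast hlampos.le
          linarith [this]
        have h2 : r = ((1 - β) / N * i' + β * y') - ((1 - β) / N * i + β * y) := by
          rw [← hcy, ← hcry]; ring
        linarith [hby.2, hby'.1]
    have hcont : Continuous (fun x : ℝ => r * x + c) :=
      (continuous_const.mul continuous_id).add continuous_const
    have hcopy : IsCompact ((fun x : ℝ => r * x + c) '' Gamma N β) :=
      (Gamma_isCompact hN hβ0 hβ1').image hcont
    have hsplit : ∀ z ∈ (fun x : ℝ => r * x + c) '' Gamma N β,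
        z ≤ (1 - β) / N * i + β ∨ (1 - β) / N * (i + 1) ≤ z := by
      rintro z ⟨x, hx, rfl⟩
      show r * x + c ≤ _ ∨ _ ≤ r * x + c
      have hz : r * x + c ∈ Gamma N β := hmap x hx
      rcases mem_decomp hN hβ0 hβ1' hz with ⟨j, hj0, hjN, w, hw, hzw⟩
      have hw01 := Gamma_subset_Icc hN hβ0 hβ1' hw
      have hbw := hbnd w hw01
      rcases le_or_gt j i with h | h
      · left
        have h1 : (1 - β) / N * j ≤ (1 - β) / N * i :=
          mul_le_mul_of_nonneg_left (by exact_mod_cast h) hlampos.le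
        rw [hzw]
        linarith [hbw.2]
      · right
        have hcast : (i : ℝ) + 1 ≤ j := by exact_mod_cast h
        have h1 : (1 - β) / N * (i + 1) ≤ (1 - β) / N * j :=
          mul_le_mul_of_nonneg_left hcast hlampos.le
        rw [hzw]
        linarith [hbw.1]
    set A := ((fun x : ℝ => r * x + c) '' Gamma N β) ∩ Set.Iic ((1 - β) / N * i + β)
      with hAdef
    set B := ((fun x : ℝ => r * x + c) '' Gamma N β) ∩ Set.Ici ((1 - β) / N * (i + 1))
      with hBdef
    have hAcomp : IsCompact A := hcopy.inter_right isClosed_Iic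
    have hBcomp : IsCompact B := hcopy.inter_right isClosed_Ici
    have hAne : A.Nonempty := by
      refine ⟨c, ⟨0, zero_mem_Gamma hN hβ0 hβ1', by simp⟩, ?_⟩
      rw [Set.mem_Iic, hcy]
      linarith [hby.2]
    have hBne : B.Nonempty := by
      refine ⟨r + c, ⟨1, one_mem_Gamma hN hβ0 hβ1', by simp⟩, ?_⟩
      rw [Set.mem_Ici, hcry]
      have hcast : (i : ℝ) + 1 ≤ i' := by exact_mod_cast hii
      have h1 : (1 - β) / N * (i + 1) ≤ (1 - β) / N * i' :=
        mul_le_mul_of_nonneg_left hcast hlampos.le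
      linarith [hby'.1]
    have haA : sSup A ∈ A := hAcomp.sSup_mem hAne
    have hbB : sInf B ∈ B := hBcomp.sInf_mem hBne
    have hgap : (1 - β) / N * i + β < (1 - β) / N * (i + 1) := by
      have : (1 - β) / N * (i + 1) = (1 - β) / N * i + (1 - β) / N := by ring
      rw [this]
      linarith
    have haub : sSup A ≤ (1 - β) / N * i + β := haA.2
    have hblb : (1 - β) / N * (i + 1) ≤ sInf B := hbB.2
    have hab : sSup A < sInf B := lt_of_le_of_lt haub (lt_of_lt_of_le hgap hblb)
    obtain ⟨pa, hpa, hpa2⟩ := haA.1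
    obtain ⟨pb, hpb, hpb2⟩ := hbB.1
    replace hpa2 : r * pa + c = sSup A := hpa2
    replace hpb2 : r * pb + c = sInf B := hpb2
    have hpab : pa < pb := by
      by_contra hcon
      push_neg at hcon
      have h1 : r * pb ≤ r * pa := mul_le_mul_of_nonneg_left hcon hr0.le
      linarith
    have hhole : ∀ w ∈ Gamma N β, ¬(pa < w ∧ w < pb) := by
      rintro w hw ⟨h1, h2⟩
      have hz : r * w + c ∈ (fun x : ℝ => r * x + c) '' Gamma N β := ⟨w, hw, rfl⟩
      have hza : sSup A < r * w + c := by
        have := mul_lt_mul_of_pos_left h1 hr0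
        linarith
      have hzb : r * w + c < sInf B := by
        have := mul_lt_mul_of_pos_left h2 hr0
        linarith
      rcases hsplit _ hz with h | h
      · have hmem : r * w + c ∈ A := ⟨hz, h⟩
        have := le_csSup hAcomp.bddAbove hmem
        linarith
      · have hmem : r * w + c ∈ B := ⟨hz, h⟩
        have := csInf_le hBcomp.bddBelow hmem
        linarith
    have hple := hole_le hN hβ0 hβ1 hpa hpb hpab hhole
    have hba : (1 - β) / N - β ≤ sInf B - sSup A := by
      have : (1 - β) / N * (i + 1) = (1 - β) / N * i + (1 - β) / N := by ring
      rw [this] at hblb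
      linarith
    have hba2 : sInf B - sSup A = r * (pb - pa) := by
      rw [← hpa2, ← hpb2]; ring
    have hγpos : 0 < (1 - β) / N - β := by linarith
    have hr1' : 1 ≤ r := by nlinarith [hba, hba2, hple, hr2, hγpos, hpab]
    have hre : r = 1 := le_antisymm hr2 hr1'
    have hc01 := Gamma_subset_Icc hN hβ0 hβ1' hc
    have hcr01 := Gamma_subset_Icc hN hβ0 hβ1' hcr
    have hc0 : c = 0 := by
      rw [hre] at hcr01
      have h1 := hcr01.2
      have h2 := hc01.1
      linarith
    refine ⟨by rw [hre, pow_zero], fun _ => 0, by simp, by simp, ?_⟩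
    rw [hc0, gval_zero]
  | succ n IH =>
    intro r c hr1 hr2 hmap
    have hr0 : 0 < r := lt_trans (by positivity) hr1
    have hrβ : r ≤ β := by
      calc r ≤ β ^ (n + 1) := hr2
        _ ≤ β ^ 1 := pow_le_pow_of_le_one hβ0.le hβ1'.le (by omega)
        _ = β := pow_one β
    have hc : c ∈ Gamma N β := by
      have := hmap 0 (zero_mem_Gamma hN hβ0 hβ1')
      simpa using this
    rcases mem_decomp hN hβ0 hβ1' hc with ⟨i, hi0, hiN, y, hy, hcy⟩
    have hy01 := Gamma_subset_Icc hN hβ0 hβ1' hy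
    have hby := hbnd y hy01
    have key : ∀ x ∈ Gamma N β, (r / β) * x + y ∈ Gamma N β := by
      intro x hx
      have hx01 := Gamma_subset_Icc hN hβ0 hβ1' hx
      have hz : r * x + c ∈ Gamma N β := hmap x hx
      rcases mem_decomp hN hβ0 hβ1' hz with ⟨j, hj0, hjN, w, hw, hzw⟩
      have hw01 := Gamma_subset_Icc hN hβ0 hβ1' hw
      have hbw := hbnd w hw01
      have hzc1 : 0 ≤ r * x := mul_nonneg hr0.le hx01.1
      have hzc2 : r * x ≤ β := by nlinarith [hx01.2]
      have hrx : r * x = ((1 - β) / N * j + β * w) - ((1 - β) / N * i + β * y) := by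
        rw [← hcy, ← hzw]; ring
      have hij : j = i := by
        rcases lt_trichotomy j i with h | h | h
        · exfalso
          have hcast : (j : ℝ) + 1 ≤ i := by exact_mod_cast h
          have h1 : (1 - β) / N * ((j:ℝ) + 1) ≤ (1 - β) / N * i :=
            mul_le_mul_of_nonneg_left hcast hlampos.le
          have he : (1 - β) / N * ((j:ℝ) + 1) = (1 - β) / N * j + (1 - β) / N := by ring
          linarith [hbw.2, hby.1]
        · exact h
        · exfalso
          have hcast : (i : ℝ) + 1 ≤ j := by exact_mod_cast h
          have h1 : (1 - β) / N * ((i:ℝ) + 1) ≤ (1 - β) / N * j :=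
            mul_le_mul_of_nonneg_left hcast hlampos.le
          have he : (1 - β) / N * ((i:ℝ) + 1) = (1 - β) / N * i + (1 - β) / N := by ring
          linarith [hbw.1, hby.2]
      have hwv : (r / β) * x + y = w := by
        rw [hij] at hrx
        have h1 : r * x = β * w - β * y := by linarith
        field_simp
        linarith
      rw [hwv]
      exact hw
    have hd1 : β ^ (n + 1) < r / β := by
      rw [lt_div_iff₀ hβ0]
      calc β ^ (n + 1) * β = β ^ (n + 2) := by rw [← pow_succ]
        _ < r := hr1
    have hd2 : r / β ≤ β ^ n := by
      rw [div_le_iff₀ hβ0]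
      calc r ≤ β ^ (n + 1) := hr2
        _ = β ^ n * β := by rw [pow_succ]
    rcases IH (r / β) y hd1 hd2 key with ⟨h1, v', hv'1, hv'2, hv'3⟩
    have hre : r = β ^ (n + 1) := by
      have h2 : r / β = β ^ n := h1
      field_simp at h2
      rw [h2, pow_succ, mul_comm]
    set v : ℕ → ℤ := fun k => if k = 0 then i else v' (k - 1) with hvdef
    have hv1 : ∀ k, 0 ≤ v k ∧ v k ≤ N := by
      intro k
      by_cases h : k = 0 <;> simp [hvdef, h]
      · exact ⟨hi0, hiN⟩
      · exact hv'1 (k - 1)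
    have habs : ∀ k, |(v k : ℝ)| ≤ (N : ℝ) := by
      intro k
      rw [abs_of_nonneg (by exact_mod_cast (hv1 k).1)]
      exact_mod_cast (hv1 k).2
    have hgd := gval_decomp hN hβ0 hβ1' v habs
    have hv0 : v 0 = i := rfl
    have hvs : (fun k => v (k + 1)) = v' := by
      funext k
      show (if k + 1 = 0 then i else v' (k + 1 - 1)) = v' k
      rw [if_neg (Nat.succ_ne_zero k)]
      rfl
    refine ⟨hre, v, hv1, ?_, ?_⟩
    · intro k hk
      have hk0 : k ≠ 0 := by omega
      show (if k = 0 then i else v' (k - 1)) = 0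
      rw [if_neg hk0]
      exact hv'2 (k - 1) (by omega)
    · rw [hgd, hv0, hvs, ← hv'3, ← hcy]

lemma gval_add (hβ0 : 0 < β) (hβ1' : β < 1) (a b : ℕ → ℤ) {C D : ℝ}
    (ha : ∀ k, |(a k : ℝ)| ≤ C) (hb : ∀ k, |(b k : ℝ)| ≤ D) :
    gval N β (fun k => a k + b k) = gval N β a + gval N β b := by
  have hsa : Summable (fun k : ℕ => (a k : ℝ) * β ^ k) := summable_digit hβ0 hβ1' a ha
  have hsb : Summable (fun k : ℕ => (b k : ℝ) * β ^ k) := summable_digit hβ0 hβ1' b hb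
  unfold gval
  rw [← mul_add, ← Summable.tsum_add hsa hsb]
  congr 1
  apply tsum_congr
  intro k
  push_cast
  ring

lemma gval_finsupp (hβ0 : 0 < β) (hβ1' : β < 1) (v : ℕ → ℤ) (n : ℕ)
    (hvz : ∀ k, n ≤ k → v k = 0) :
    gval N β v = (1 - β) / N * ∑ k ∈ Finset.range n, (v k : ℝ) * β ^ k := by
  unfold gval
  congr 1
  apply tsum_eq_sum
  intro k hk
  rw [hvz k (by simpa using hk)]
  simp

/-- staircase digits: 1 in positions n-j .. n-1 -/
def stairFn (n j : ℕ) : ℕ → ℤ := fun k => if n - j ≤ k ∧ k < n then 1 else 0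

lemma stairFn_mem (n j k : ℕ) : stairFn n j k = 0 ∨ stairFn n j k = 1 := by
  unfold stairFn
  split <;> simp

lemma stairFn_abs (n j : ℕ) : ∀ k, |(stairFn n j k : ℝ)| ≤ 1 := by
  intro k
  rcases stairFn_mem n j k with h | h <;> rw [h] <;> norm_num

lemma stair_val (hN : 0 < N) (hβ0 : 0 < β) (hβ1' : β < 1) {n j : ℕ} (hj : j ≤ n) :
    gval N β (stairFn n j)
      = β ^ n * ((1 - β) / N * ∑ k ∈ Finset.Icc 1 j, β ^ (-(k : ℤ))) := by
  have h1 : gval N β (stairFn n j)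
      = (1 - β) / N * ∑ k ∈ Finset.range n, (stairFn n j k : ℝ) * β ^ k :=
    gval_finsupp hβ0 hβ1' _ n (fun k hk => by unfold stairFn; rw [if_neg]; omega)
  have hsub : Finset.Ico (n - j) n ⊆ Finset.range n := by
    intro k hk
    rw [Finset.mem_Ico] at hk
    rw [Finset.mem_range]
    omega
  have h2 : ∑ k ∈ Finset.range n, (stairFn n j k : ℝ) * β ^ k
      = ∑ k ∈ Finset.Ico (n - j) n, β ^ k := by
    rw [← Finset.sum_subset hsub]
    · apply Finset.sum_congr rfl
      intro k hk
      rw [Finset.mem_Ico] at hk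
      unfold stairFn
      rw [if_pos hk]
      norm_num
    · intro k hk1 hk2
      rw [Finset.mem_range] at hk1
      rw [Finset.mem_Ico] at hk2
      unfold stairFn
      rw [if_neg (by omega)]
      norm_num
  have hβne : β ≠ 0 := ne_of_gt hβ0
  have h3 : ∀ k ∈ Finset.Icc 1 j, β ^ n * β ^ (-(k : ℤ)) = β ^ (n - k) := by
    intro k hk
    rw [Finset.mem_Icc] at hk
    have : β ^ n = (β ^ (n : ℤ) : ℝ) := by rw [zpow_natCast]
    rw [this, ← zpow_add₀ hβne]
    have he : (n : ℤ) + -(k : ℤ) = ((n - k : ℕ) : ℤ) := by omega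
    rw [he, zpow_natCast]
  have h4 : ∑ k ∈ Finset.Icc 1 j, β ^ (n - k) = ∑ k ∈ Finset.Ico (n - j) n, β ^ k := by
    apply Finset.sum_nbij' (i := fun k => n - k) (j := fun k => n - k)
    · intro a ha
      rw [Finset.mem_Icc] at ha
      rw [Finset.mem_Ico]
      omega
    · intro a ha
      rw [Finset.mem_Ico] at ha
      rw [Finset.mem_Icc]
      omega
    · intro a ha
      rw [Finset.mem_Icc] at ha
      omega
    · intro a ha
      rw [Finset.mem_Ico] at ha
      omega
    · intro a ha
      rfl
  rw [h1, h2, ← h4]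
  rw [Finset.mul_sum, Finset.mul_sum, Finset.mul_sum]
  rw [← Finset.sum_congr rfl (fun k hk => by rw [← h3 k hk])]
  apply Finset.sum_congr rfl
  intro k hk
  ring

lemma extract (hN : 0 < N) (hβ0 : 0 < β) (hβ1 : β < 1 / (2 * N + 1)) (a v : ℕ → ℤ) (n : ℕ)
    (ha : ∀ k, 0 ≤ a k ∧ a k ≤ N) (hv : ∀ k, 0 ≤ v k ∧ v k ≤ N)
    (hvz : ∀ k, n ≤ k → v k = 0) {x : ℝ} (hx : x ∈ Gamma N β)
    (he : gval N β a = β ^ n * x + gval N β v) :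
    ∀ k, k < n → a k = v k := by
  have hβ1' := hblt1 hN hβ0 hβ1
  obtain ⟨b, hb, rfl⟩ := mem_Gamma_iff.mp hx
  set w : ℕ → ℤ := fun k => if k < n then v k else b (k - n) with hwdef
  have hw : ∀ k, 0 ≤ w k ∧ w k ≤ N := by
    intro k
    show 0 ≤ (if k < n then v k else b (k - n)) ∧ (if k < n then v k else b (k - n)) ≤ N
    by_cases h : k < n
    · rw [if_pos h]; exact hv k
    · rw [if_neg h]; exact hb (k - n)
  have babs : ∀ (c : ℕ → ℤ), (∀ k, 0 ≤ c k ∧ c k ≤ (N:ℤ)) → ∀ k, |(c k : ℝ)| ≤ (N : ℝ) := by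
    intro c hc k
    rw [abs_of_nonneg (by exact_mod_cast (hc k).1)]
    exact_mod_cast (hc k).2
  have hsw : Summable (fun k : ℕ => (w k : ℝ) * β ^ k) :=
    summable_digit hβ0 hβ1' w (babs w hw)
  have hsb : Summable (fun k : ℕ => (b k : ℝ) * β ^ k) :=
    summable_digit hβ0 hβ1' b (babs b hb)
  have hsplit : (∑ k ∈ Finset.range n, (w k : ℝ) * β ^ k)
      + ∑' k : ℕ, (w (k + n) : ℝ) * β ^ (k + n) = ∑' k : ℕ, (w k : ℝ) * β ^ k :=
    Summable.sum_add_tsum_nat_add (f := fun k : ℕ => (w k : ℝ) * β ^ k) n hsw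
  have hfin : ∑ k ∈ Finset.range n, (w k : ℝ) * β ^ k
      = ∑ k ∈ Finset.range n, (v k : ℝ) * β ^ k := by
    apply Finset.sum_congr rfl
    intro k hk
    rw [Finset.mem_range] at hk
    have : w k = v k := by rw [hwdef]; exact if_pos hk
    rw [this]
  have htail : ∑' k : ℕ, (w (k + n) : ℝ) * β ^ (k + n)
      = β ^ n * ∑' k : ℕ, (b k : ℝ) * β ^ k := by
    rw [← tsum_mul_left]
    apply tsum_congr
    intro k
    have h1 : w (k + n) = b k := by
      show (if k + n < n then v (k + n) else b (k + n - n)) = b k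
      rw [if_neg (by omega : ¬ (k + n < n))]
      congr 1
      omega
    rw [h1, pow_add]
    ring
  have hvfin : ∑' k : ℕ, (v k : ℝ) * β ^ k = ∑ k ∈ Finset.range n, (v k : ℝ) * β ^ k := by
    apply tsum_eq_sum
    intro k hk
    rw [hvz k (by simpa using hk)]
    simp
  have hgw : gval N β w = β ^ n * gval N β b + gval N β v := by
    unfold gval
    rw [← hsplit, hfin, htail, hvfin]
    ring
  have heq : gval N β a = gval N β w := by
    rw [he, hgw]
  have hNN : (N : ℤ) ≤ 2 * N := by omega
  have := uniq2 hN hβ0 hβ1 a w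
    (fun k => ⟨(ha k).1, le_trans (ha k).2 hNN⟩)
    (fun k => ⟨(hw k).1, le_trans (hw k).2 hNN⟩) heq
  intro k hk
  rw [this k]
  show (if k < n then v k else b (k - n)) = v k
  exact if_pos hk

lemma pow_window (hβ0 : 0 < β) (hβ1' : β < 1) {r : ℝ} (h0 : 0 < r) (h1 : r ≤ 1) :
    ∃ n : ℕ, β ^ (n + 1) < r ∧ r ≤ β ^ n := by
  have hex : ∃ k, β ^ (k + 1) < r := by
    obtain ⟨k, hk⟩ := exists_pow_lt_of_lt_one h0 hβ1'
    exact ⟨k, lt_of_le_of_lt (pow_le_pow_of_le_one hβ0.le hβ1'.le (by omega)) hk⟩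
  classical
  refine ⟨Nat.find hex, Nat.find_spec hex, ?_⟩
  rcases Nat.eq_zero_or_pos (Nat.find hex) with h | h
  · rw [h, pow_zero]; exact h1
  · have hmin := Nat.find_min hex (m := Nat.find hex - 1) (by omega)
    push_neg at hmin
    calc r ≤ β ^ (Nat.find hex - 1 + 1) := hmin
      _ = β ^ (Nat.find hex) := by congr 1; omega

lemma small_piece (E : Set ℝ) (F : Finset (ℝ × ℝ))
    (hFr : ∀ p ∈ F, 0 < |p.1| ∧ |p.1| < 1)
    (hcov : E = ⋃ p ∈ F, (fun x => p.1 * x + p.2) '' E)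
    {x0 : ℝ} (hx0 : x0 ∈ E) :
    ∀ ε > 0, ∃ r bb : ℝ, 0 < |r| ∧ |r| < ε ∧
      x0 ∈ (fun x => r * x + bb) '' E ∧ (fun x => r * x + bb) '' E ⊆ E := by
  intro ε hε
  have hFne : F.Nonempty := by
    rcases Finset.eq_empty_or_nonempty F with h | h
    · exfalso
      rw [h] at hcov
      simp at hcov
      rw [hcov] at hx0
      exact hx0
    · exact h
  set ρ := F.sup' hFne (fun p => |p.1|) with hρdef
  have hρ1 : ρ < 1 := (Finset.sup'_lt_iff hFne).mpr (fun p hp => (hFr p hp).2)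
  have hρ0 : 0 ≤ ρ := by
    obtain ⟨p, hp⟩ := hFne
    exact le_trans (abs_nonneg p.1) (Finset.le_sup' (fun p => |p.1|) hp)
  have key : ∀ k : ℕ, ∃ G : Finset (ℝ × ℝ),
      (∀ p ∈ G, 0 < |p.1| ∧ |p.1| ≤ ρ ^ (k + 1)) ∧
      E = ⋃ p ∈ G, (fun x => p.1 * x + p.2) '' E := by
    intro k
    induction k with
    | zero =>
      refine ⟨F, fun p hp => ⟨(hFr p hp).1, ?_⟩, hcov⟩
      rw [pow_one]
      exact Finset.le_sup' (fun p => |p.1|) hp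
    | succ k IH =>
      obtain ⟨G, hG1, hG2⟩ := IH
      refine ⟨(G ×ˢ F).image (fun pq => (pq.1.1 * pq.2.1, pq.1.1 * pq.2.2 + pq.1.2)), ?_, ?_⟩
      · intro p hp
        rw [Finset.mem_image] at hp
        obtain ⟨⟨q1, q2⟩, hq, rfl⟩ := hp
        rw [Finset.mem_product] at hq
        constructor
        · show 0 < |q1.1 * q2.1|
          rw [abs_mul]
          exact mul_pos (hG1 _ hq.1).1 (hFr _ hq.2).1
        · show |q1.1 * q2.1| ≤ ρ ^ (k + 1 + 1)
          rw [abs_mul, pow_succ]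
          exact mul_le_mul (hG1 _ hq.1).2 (Finset.le_sup' (fun p => |p.1|) hq.2)
            (abs_nonneg _) (pow_nonneg hρ0 _)
      · have himg : ∀ p : ℝ × ℝ, (fun x => p.1 * x + p.2) '' E
            = ⋃ q ∈ F, (fun x => (p.1 * q.1) * x + (p.1 * q.2 + p.2)) '' E := by
          intro p
          conv_lhs => rw [hcov]
          rw [Set.image_iUnion₂]
          apply Set.iUnion₂_congr
          intro q hq
          rw [Set.image_image]
          have : (fun x => p.1 * (q.1 * x + q.2) + p.2)
              = (fun x => (p.1 * q.1) * x + (p.1 * q.2 + p.2)) := by funext x; ring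
          rw [this]
        calc E = ⋃ p ∈ G, (fun x => p.1 * x + p.2) '' E := hG2
          _ = ⋃ p ∈ G, ⋃ q ∈ F, (fun x => (p.1 * q.1) * x + (p.1 * q.2 + p.2)) '' E :=
              Set.iUnion₂_congr (fun p _ => himg p)
          _ = ⋃ p' ∈ (G ×ˢ F).image (fun pq => (pq.1.1 * pq.2.1, pq.1.1 * pq.2.2 + pq.1.2)),
              (fun x => p'.1 * x + p'.2) '' E := by
              ext z
              simp only [Set.mem_iUnion, Finset.mem_image, Finset.mem_product, exists_prop]
              constructor
              · rintro ⟨p, hp, q, hq, hz⟩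
                exact ⟨(p.1 * q.1, p.1 * q.2 + p.2), ⟨(p, q), ⟨hp, hq⟩, rfl⟩, hz⟩
              · rintro ⟨p', ⟨⟨p, q⟩, ⟨hp, hq⟩, rfl⟩, hz⟩
                exact ⟨p, hp, q, hq, hz⟩
  obtain ⟨k, hk⟩ := exists_pow_lt_of_lt_one hε hρ1
  have hk1 : ρ ^ (k + 1) < ε :=
    lt_of_le_of_lt (pow_le_pow_of_le_one hρ0 hρ1.le (by omega)) hk
  obtain ⟨G, hG1, hG2⟩ := key k
  have hx0' : x0 ∈ ⋃ p ∈ G, (fun x => p.1 * x + p.2) '' E := hG2 ▸ hx0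
  rw [Set.mem_iUnion₂] at hx0'
  obtain ⟨p, hp, hx0p⟩ := hx0'
  refine ⟨p.1, p.2, (hG1 p hp).1, lt_of_le_of_lt (hG1 p hp).2 hk1, hx0p, ?_⟩
  intro z hz
  rw [hG2]
  exact Set.mem_iUnion₂.mpr ⟨p, hp, hz⟩

end Aux

set_option maxHeartbeats 2000000 in
/-- Suppose `0 < β < 1/(2N+1)` and `m ≥ 3`. Let `t_0 = 0` and
`t_j = (1-β)/N · Σ_{k=1}^j β^{-k}` for `1 ≤ j ≤ m`. Then `Γ_t = ⋃_{j=0}^m (Γ + t_j)`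
is not a self-similar set. -/
theorem stmt19 (N : ℕ) (hN : 0 < N) (β : ℝ) (hβ0 : 0 < β) (hβ1 : β < 1 / (2 * N + 1))
    (m : ℕ) (hm : 3 ≤ m) :
    ¬ IsSelfSimilar (GammaT N β (fun j : Fin (m + 1) =>
      (1 - β) / N * ∑ k ∈ Finset.Icc 1 (j : ℕ), β ^ (-(k : ℤ)))) := by
  intro hSS
  obtain ⟨hne, hcmp, F, hFr, hcov⟩ := hSS
  set t : Fin (m + 1) → ℝ := fun j =>
    (1 - β) / N * ∑ k ∈ Finset.Icc 1 (j : ℕ), β ^ (-(k : ℤ)) with htdef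
  set E : Set ℝ := GammaT N β t with hEdef
  have hβ1' := hblt1 hN hβ0 hβ1
  have hNpos : (0:ℝ) < N := by exact_mod_cast hN
  have hBB := hB hN hβ0 hβ1
  have hlam : 2 * β < (1 - β) / N := by
    rw [lt_div_iff₀ hNpos]
    nlinarith
  have hzp : ∀ k : ℕ, (0:ℝ) < β ^ (-(k : ℤ)) := fun k => zpow_pos hβ0 _
  -- T values
  set Tm : ℝ := (1 - β) / N * ∑ k ∈ Finset.Icc 1 m, β ^ (-(k : ℤ)) with hTmdef
  set T1 : ℝ := (1 - β) / N * ∑ k ∈ Finset.Icc 1 1, β ^ (-(k : ℤ)) with hT1def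
  have hlampos : (0:ℝ) < (1 - β) / N := by linarith
  have hsum_nonneg : ∀ s : Finset ℕ, (0:ℝ) ≤ ∑ k ∈ s, β ^ (-(k : ℤ)) :=
    fun s => Finset.sum_nonneg (fun k _ => (hzp k).le)
  have hsum_mono : ∀ a b : ℕ, a ≤ b →
      (∑ k ∈ Finset.Icc 1 a, β ^ (-(k : ℤ))) ≤ ∑ k ∈ Finset.Icc 1 b, β ^ (-(k : ℤ)) := by
    intro a b hab
    apply Finset.sum_le_sum_of_subset_of_nonneg
    · exact Finset.Icc_subset_Icc_right hab
    · intro k _ _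
      exact (hzp k).le
  have htnn : ∀ j : Fin (m + 1), 0 ≤ t j :=
    fun j => mul_nonneg hlampos.le (hsum_nonneg _)
  have htm : ∀ j : Fin (m + 1), t j ≤ Tm := by
    intro j
    apply mul_le_mul_of_nonneg_left _ hlampos.le
    exact hsum_mono _ _ (Nat.lt_succ_iff.mp j.2)
  have ht1le : ∀ j : Fin (m + 1), 1 ≤ (j:ℕ) → T1 ≤ t j := by
    intro j hj
    apply mul_le_mul_of_nonneg_left _ hlampos.le
    exact hsum_mono _ _ hj
  have hT1val : T1 = (1 - β) / N * β⁻¹ := by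
    rw [hT1def, Finset.Icc_self, Finset.sum_singleton]
    norm_num
  have hT1gt2 : 2 < T1 := by
    rw [hT1val, ← div_eq_mul_inv, lt_div_iff₀ hβ0]
    linarith
  have hTmnn : 0 ≤ Tm := mul_nonneg hlampos.le (hsum_nonneg _)
  have hTm1pos : (0:ℝ) < Tm + 1 := by linarith
  have ht0 : t 0 = 0 := by
    rw [htdef]
    show (1 - β) / N * ∑ k ∈ Finset.Icc 1 ((0 : Fin (m+1)) : ℕ), β ^ (-(k : ℤ)) = 0
    rw [Fin.val_zero, Finset.Icc_eq_empty (by omega), Finset.sum_empty, mul_zero]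
  -- membership in E
  have hEmem : ∀ z : ℝ, z ∈ E ↔ ∃ j : Fin (m + 1), ∃ g ∈ Gamma N β, g + t j = z := by
    intro z
    rw [hEdef]
    unfold GammaT
    simp only [Set.mem_iUnion, Set.mem_image]
  have hEsub : E ⊆ Set.Icc 0 (Tm + 1) := by
    intro z hz
    obtain ⟨j, g, hg, rfl⟩ := (hEmem z).mp hz
    have hg01 := Gamma_subset_Icc hN hβ0 hβ1' hg
    exact ⟨by linarith [hg01.1, htnn j], by linarith [hg01.2, htm j]⟩
  have hΓE : Gamma N β ⊆ E := by
    intro g hg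
    exact (hEmem g).mpr ⟨0, g, hg, by rw [ht0, add_zero]⟩
  -- the special point
  set astar : ℕ → ℤ := fun k => if Even k then (N:ℤ) else 0 with hastdef
  have hast : ∀ k, 0 ≤ astar k ∧ astar k ≤ N := by
    intro k
    show 0 ≤ (if Even k then (N:ℤ) else 0) ∧ (if Even k then (N:ℤ) else 0) ≤ N
    by_cases h : Even k
    · rw [if_pos h]; omega
    · rw [if_neg h]; omega
  have hastE : ∀ k, Even k → astar k = N := by
    intro k h
    show (if Even k then (N:ℤ) else 0) = N
    rw [if_pos h]
  have hastO : ∀ k, ¬ Even k → astar k = 0 := by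
    intro k h
    show (if Even k then (N:ℤ) else 0) = 0
    rw [if_neg h]
  have hcases : ∀ k, astar k = 0 ∨ astar k = N := by
    intro k
    by_cases h : Even k
    · right; exact hastE k h
    · left; exact hastO k h
  have hxΓ : gval N β astar ∈ Gamma N β := mem_Gamma_iff.mpr ⟨astar, hast, rfl⟩
  have hxE : gval N β astar ∈ E := hΓE hxΓ
  have hx01 := Gamma_subset_Icc hN hβ0 hβ1' hxΓ
  -- choose a small piece containing xstar
  have hεpos : 0 < min (β ^ m) ((T1 - 1) / (Tm + 1)) := by
    apply lt_min (by positivity)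
    apply div_pos (by linarith) hTm1pos
  obtain ⟨r, bb, hr0, hrε, hxpiece, hpieceE⟩ :=
    small_piece E F hFr hcov hxE (min (β ^ m) ((T1 - 1) / (Tm + 1))) hεpos
  have hεβ : min (β ^ m) ((T1 - 1) / (Tm + 1)) ≤ β ^ m := min_le_left _ _
  have hεT : min (β ^ m) ((T1 - 1) / (Tm + 1)) ≤ (T1 - 1) / (Tm + 1) := min_le_right _ _
  have hrβm : |r| < β ^ m := lt_of_lt_of_le hrε hεβ
  have hrT : |r| * (Tm + 1) < T1 - 1 := by
    have h1 : |r| * (Tm + 1) < min (β ^ m) ((T1 - 1) / (Tm + 1)) * (Tm + 1) :=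
      mul_lt_mul_of_pos_right hrε hTm1pos
    have h2 : min (β ^ m) ((T1 - 1) / (Tm + 1)) * (Tm + 1) ≤ (T1 - 1) / (Tm + 1) * (Tm + 1) :=
      mul_le_mul_of_nonneg_right hεT hTm1pos.le
    rw [div_mul_cancel₀ _ (ne_of_gt hTm1pos)] at h2
    linarith
  obtain ⟨e0, he0E, heq0⟩ := hxpiece
  replace heq0 : r * e0 + bb = gval N β astar := heq0
  -- the piece is inside Gamma
  have hpieceΓ : (fun x => r * x + bb) '' E ⊆ Gamma N β := by
    rintro z ⟨e, heE, rfl⟩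
    show r * e + bb ∈ Gamma N β
    have hzE : r * e + bb ∈ E := hpieceE ⟨e, heE, rfl⟩
    have he01 := hEsub heE
    have he001 := hEsub he0E
    have hdiff : |e - e0| ≤ Tm + 1 := by
      rw [abs_le]
      constructor <;> [linarith [he01.1, he001.2]; linarith [he01.2, he001.1]]
    have h1 : r * e + bb - gval N β astar = r * (e - e0) := by
      rw [← heq0]; ring
    have h2 : r * e + bb - gval N β astar ≤ |r| * (Tm + 1) := by
      calc r * e + bb - gval N β astar ≤ |r * e + bb - gval N β astar| := le_abs_self _
        _ = |r| * |e - e0| := by rw [h1, abs_mul]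
        _ ≤ |r| * (Tm + 1) := mul_le_mul_of_nonneg_left hdiff (abs_nonneg r)
    have hzlt : r * e + bb < T1 := by linarith [hx01.2]
    obtain ⟨J, g, hg, hgz⟩ := (hEmem _).mp hzE
    have hg01 := Gamma_subset_Icc hN hβ0 hβ1' hg
    rcases Nat.eq_zero_or_pos (J : ℕ) with hJ | hJ
    · have : t J = 0 := by
        rw [htdef]
        show (1 - β) / N * ∑ k ∈ Finset.Icc 1 ((J : Fin (m+1)) : ℕ), β ^ (-(k : ℤ)) = 0
        rw [hJ, Finset.Icc_eq_empty (by omega), Finset.sum_empty, mul_zero]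
      rw [← hgz, this, add_zero]
      exact hg
    · exfalso
      have := ht1le J hJ
      have : T1 ≤ r * e + bb := by
        rw [← hgz]
        linarith [hg01.1]
      linarith
  have hrne : r ≠ 0 := fun h => by rw [h, abs_zero] at hr0; exact lt_irrefl 0 hr0
  have hβm1 : β ^ m ≤ 1 := pow_le_one₀ hβ0.le hβ1'.le
  -- CASE SPLIT on sign of r
  rcases lt_or_gt_of_ne hrne with hrneg | hrpos
  · -- r < 0
    have habs : |r| = -r := abs_of_neg hrneg
    have hρpos : 0 < -r := by linarith
    have hρ1 : -r ≤ 1 := by rw [← habs]; exact le_trans hrβm.le hβm1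
    have hmapj : ∀ j : Fin (m + 1), ∀ y ∈ Gamma N β,
        (-r) * y + (r * (1 + t j) + bb) ∈ Gamma N β := by
      intro j y hy
      have hx : 1 - y ∈ Gamma N β := compl_mem hN hβ0 hβ1' hy
      have h1 : (1 - y) + t j ∈ E := (hEmem _).mpr ⟨j, 1 - y, hx, rfl⟩
      have h2 : r * ((1 - y) + t j) + bb ∈ Gamma N β := hpieceΓ ⟨(1 - y) + t j, h1, rfl⟩
      have he : r * ((1 - y) + t j) + bb = (-r) * y + (r * (1 + t j) + bb) := by ring
      rwa [he] at h2
    obtain ⟨n, hw1, hw2⟩ := pow_window hβ0 hβ1' hρpos hρ1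
    have hlemR := fun j : Fin (m + 1) =>
      lemR hN hβ0 hβ1 n (-r) (r * (1 + t j) + bb) hw1 hw2 (hmapj j)
    have hrn : -r = β ^ n := (hlemR 0).1
    choose v hv1 hv2 hv3 using fun j => (hlemR j).2
    have hnm : m < n := by
      by_contra hc
      push_neg at hc
      have h1 : β ^ m ≤ β ^ n := pow_le_pow_of_le_one hβ0.le hβ1'.le hc
      rw [← hrn, ← habs] at h1
      linarith
    -- staircase digit relation
    have hstair : ∀ j : Fin (m + 1),
        gval N β (fun k => v j k + stairFn n (j : ℕ) k) = gval N β (v 0) := by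
      intro j
      have bdd : ∀ (c : ℕ → ℤ), (∀ k, 0 ≤ c k ∧ c k ≤ (N:ℤ)) → ∀ k, |(c k : ℝ)| ≤ (N:ℝ) := by
        intro c hc k
        rw [abs_of_nonneg (by exact_mod_cast (hc k).1)]
        exact_mod_cast (hc k).2
      rw [gval_add hβ0 hβ1' (v j) (stairFn n (j:ℕ)) (bdd (v j) (hv1 j)) (stairFn_abs n (j:ℕ))]
      have hsv : gval N β (stairFn n (j:ℕ)) = β ^ n * t j :=
        stair_val hN hβ0 hβ1' (le_of_lt (lt_of_le_of_lt (Nat.lt_succ_iff.mp j.2) hnm))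
      rw [hsv, ← hv3 j, ← hv3 0, ht0]
      rw [← hrn]
      ring
    have hdig : ∀ j : Fin (m + 1), ∀ k, v 0 k = v j k + stairFn n (j : ℕ) k := by
      intro j
      have h2N : ∀ k, 0 ≤ v 0 k ∧ v 0 k ≤ 2 * N := by
        intro k
        have := hv1 0 k
        omega
      have h2N' : ∀ k, 0 ≤ v j k + stairFn n (j:ℕ) k ∧ v j k + stairFn n (j:ℕ) k ≤ 2 * N := by
        intro k
        have h1 := hv1 j k
        rcases stairFn_mem n (j:ℕ) k with h | h <;> rw [h] <;> omega
      have := uniq2 hN hβ0 hβ1 (v 0) (fun k => v j k + stairFn n (j:ℕ) k) h2N h2N'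
        (hstair j).symm
      intro k
      exact this k
    have hwin : ∀ k, n - m ≤ k → k < n → 1 ≤ v 0 k := by
      intro k hk1 hk2
      have h1 := hdig (Fin.last m) k
      have h2 : stairFn n ((Fin.last m : Fin (m+1)) : ℕ) k = 1 := by
        unfold stairFn
        rw [Fin.val_last]
        rw [if_pos ⟨hk1, hk2⟩]
      rw [h2] at h1
      have := (hv1 (Fin.last m) k).1
      omega
    -- xstar digits
    obtain ⟨j, x, hxg, hxe⟩ := (hEmem e0).mp he0E
    have hy : 1 - x ∈ Gamma N β := compl_mem hN hβ0 hβ1' hxg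
    have hxd : gval N β astar = β ^ n * (1 - x) + gval N β (v j) := by
      rw [← hv3 j, ← hrn, ← heq0, ← hxe]
      ring
    have hdigx : ∀ k, k < n → astar k = v j k :=
      extract hN hβ0 hβ1 astar (v j) n hast (hv1 j) (hv2 j) hy hxd
    -- implication: astar (k+1) = N → astar k = N on the window
    have hImp : ∀ k, n - m ≤ k → k + 1 < n → astar (k + 1) = N → astar k = N := by
      intro k hk1 hk2 hkN
      have h1 : v 0 (k+1) = v j (k+1) + stairFn n (j:ℕ) (k+1) := hdig j (k+1)
      have hs0 : stairFn n (j:ℕ) (k+1) = 0 := by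
        rcases stairFn_mem n (j:ℕ) (k+1) with h | h
        · exact h
        · exfalso
          have h3 : astar (k+1) = v j (k+1) := hdigx (k+1) (by omega)
          have h4 := hv1 0 (k+1)
          rw [h] at h1
          omega
      have hcond : ¬ (n - (j:ℕ) ≤ k + 1) := by
        intro hc
        unfold stairFn at hs0
        rw [if_pos ⟨hc, by omega⟩] at hs0
        exact absurd hs0 (by norm_num)
      have hsk : stairFn n (j:ℕ) k = 0 := by
        unfold stairFn
        rw [if_neg (by omega)]
      have h5 : astar k = v j k := hdigx k (by omega)
      have h6 : v 0 k = v j k := by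
        have := hdig j k
        rw [hsk] at this
        omega
      have h7 := hwin k hk1 (by omega)
      rcases hcases k with h | h
      · exfalso; omega
      · exact h
    -- parity contradiction
    have hk03 : (n - 3) + 3 = n := by omega
    rcases Nat.even_or_odd (n - 3) with hpar | hpar
    · have hA : astar ((n - 3) + 2) = N := by
        apply hastE
        rw [Nat.even_iff] at hpar ⊢
        omega
      have hB := hImp ((n-3)+1) (by omega) (by omega) hA
      have hodd : ¬ Even ((n-3)+1) := by
        rw [Nat.even_iff] at hpar ⊢
        omega
      have := hastO _ hodd
      rw [this] at hB
      have hNz : (0:ℤ) < (N:ℤ) := by exact_mod_cast hN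
      omega
    · have hA : astar ((n - 3) + 1) = N := by
        apply hastE
        rw [Nat.odd_iff] at hpar
        rw [Nat.even_iff]
        omega
      have hB := hImp (n-3) (by omega) (by omega) hA
      have hodd : ¬ Even (n-3) := by
        rw [Nat.odd_iff] at hpar
        rw [Nat.even_iff]
        omega
      have := hastO _ hodd
      rw [this] at hB
      have hNz : (0:ℤ) < (N:ℤ) := by exact_mod_cast hN
      omega
  · -- r > 0
    have habs : |r| = r := abs_of_pos hrpos
    have hr1 : r ≤ 1 := by rw [← habs]; exact le_trans hrβm.le hβm1
    have hmapj : ∀ j : Fin (m + 1), ∀ x ∈ Gamma N β,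
        r * x + (r * t j + bb) ∈ Gamma N β := by
      intro j x hx
      have h1 : x + t j ∈ E := (hEmem _).mpr ⟨j, x, hx, rfl⟩
      have h2 : r * (x + t j) + bb ∈ Gamma N β := hpieceΓ ⟨x + t j, h1, rfl⟩
      have he : r * (x + t j) + bb = r * x + (r * t j + bb) := by ring
      rwa [he] at h2
    obtain ⟨n, hw1, hw2⟩ := pow_window hβ0 hβ1' hrpos hr1
    have hlemR := fun j : Fin (m + 1) =>
      lemR hN hβ0 hβ1 n r (r * t j + bb) hw1 hw2 (hmapj j)
    have hrn : r = β ^ n := (hlemR 0).1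
    choose v hv1 hv2 hv3 using fun j => (hlemR j).2
    have hnm : m < n := by
      by_contra hc
      push_neg at hc
      have h1 : β ^ m ≤ β ^ n := pow_le_pow_of_le_one hβ0.le hβ1'.le hc
      rw [← hrn, ← habs] at h1
      linarith
    have hstair : ∀ j : Fin (m + 1),
        gval N β (fun k => v 0 k + stairFn n (j : ℕ) k) = gval N β (v j) := by
      intro j
      have bdd : ∀ (c : ℕ → ℤ), (∀ k, 0 ≤ c k ∧ c k ≤ (N:ℤ)) → ∀ k, |(c k : ℝ)| ≤ (N:ℝ) := by
        intro c hc k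
        rw [abs_of_nonneg (by exact_mod_cast (hc k).1)]
        exact_mod_cast (hc k).2
      rw [gval_add hβ0 hβ1' (v 0) (stairFn n (j:ℕ)) (bdd (v 0) (hv1 0)) (stairFn_abs n (j:ℕ))]
      have hsv : gval N β (stairFn n (j:ℕ)) = β ^ n * t j :=
        stair_val hN hβ0 hβ1' (le_of_lt (lt_of_le_of_lt (Nat.lt_succ_iff.mp j.2) hnm))
      rw [hsv, ← hv3 j, ← hv3 0, ht0, ← hrn]
      ring
    have hdig : ∀ j : Fin (m + 1), ∀ k, v j k = v 0 k + stairFn n (j : ℕ) k := by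
      intro j
      have h2N : ∀ k, 0 ≤ v j k ∧ v j k ≤ 2 * N := by
        intro k
        have := hv1 j k
        omega
      have h2N' : ∀ k, 0 ≤ v 0 k + stairFn n (j:ℕ) k ∧ v 0 k + stairFn n (j:ℕ) k ≤ 2 * N := by
        intro k
        have h1 := hv1 0 k
        rcases stairFn_mem n (j:ℕ) k with h | h <;> rw [h] <;> omega
      have := uniq2 hN hβ0 hβ1 (v j) (fun k => v 0 k + stairFn n (j:ℕ) k) h2N h2N'
        (hstair j).symm
      intro k
      exact this k
    have hwin : ∀ k, n - m ≤ k → k < n → v 0 k + 1 ≤ N := by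
      intro k hk1 hk2
      have h1 := hdig (Fin.last m) k
      have h2 : stairFn n ((Fin.last m : Fin (m+1)) : ℕ) k = 1 := by
        unfold stairFn
        rw [Fin.val_last]
        rw [if_pos ⟨hk1, hk2⟩]
      rw [h2] at h1
      have := (hv1 (Fin.last m) k).2
      omega
    obtain ⟨j, x, hxg, hxe⟩ := (hEmem e0).mp he0E
    have hxd : gval N β astar = β ^ n * x + gval N β (v j) := by
      rw [← hv3 j, ← hrn, ← heq0, ← hxe]
      ring
    have hdigx : ∀ k, k < n → astar k = v j k :=
      extract hN hβ0 hβ1 astar (v j) n hast (hv1 j) (hv2 j) hxg hxd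
    have hImp : ∀ k, n - m ≤ k → k + 1 < n → astar k = N → astar (k + 1) = N := by
      intro k hk1 hk2 hkN
      have h1 : v j k = v 0 k + stairFn n (j:ℕ) k := hdig j k
      have hs1 : stairFn n (j:ℕ) k = 1 := by
        rcases stairFn_mem n (j:ℕ) k with h | h
        · exfalso
          have h3 : astar k = v j k := hdigx k (by omega)
          have h4 := hwin k hk1 (by omega)
          rw [h] at h1
          omega
        · exact h
      have hcond : n - (j:ℕ) ≤ k := by
        by_contra hc
        unfold stairFn at hs1
        rw [if_neg (by omega)] at hs1
        exact absurd hs1 (by norm_num)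
      have hs2 : stairFn n (j:ℕ) (k+1) = 1 := by
        unfold stairFn
        rw [if_pos ⟨by omega, by omega⟩]
      have h5 : astar (k+1) = v j (k+1) := hdigx (k+1) (by omega)
      have h6 : v j (k+1) = v 0 (k+1) + 1 := by
        have := hdig j (k+1)
        rw [hs2] at this
        omega
      have h7 := (hv1 0 (k+1)).1
      rcases hcases (k+1) with h | h
      · exfalso; omega
      · exact h
    have hk03 : (n - 3) + 3 = n := by omega
    rcases Nat.even_or_odd (n - 3) with hpar | hpar
    · have hA : astar (n - 3) = N := hastE _ hpar
      have hB := hImp (n-3) (by omega) (by omega) hA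
      have hodd : ¬ Even ((n-3)+1) := by
        rw [Nat.even_iff] at hpar ⊢
        omega
      have := hastO _ hodd
      rw [this] at hB
      have hNz : (0:ℤ) < (N:ℤ) := by exact_mod_cast hN
      omega
    · have hA : astar ((n - 3) + 1) = N := by
        apply hastE
        rw [Nat.odd_iff] at hpar
        rw [Nat.even_iff]
        omega
      have hB := hImp ((n-3)+1) (by omega) (by omega) hA
      have hodd : ¬ Even ((n-3)+2) := by
        rw [Nat.odd_iff] at hpar
        rw [Nat.even_iff]
        omega
      have := hastO _ hodd
      rw [this] at hB
      have hNz : (0:ℤ) < (N:ℤ) := by exact_mod_cast hN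
      omega



end HSCantor
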